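/- Let H ∈ (1/2, 1), k ∈ ℕ, T > 0, and set a := 1/2 − (1−H)/k. Then for all u, v ∈ (0, T] with u ≠ v, one has ( (uv)^a · ∫_0^{min(u,v)} x^{−2a} (u − x)^{a−1} (v − x)^{a−1} dx )^k = B(a, 1 − 2a)^k · |u − v|^{2H − 2}, where B(·,·) is the Euler Beta function. (Note 1 − 2a = 2(1−H)/k and a − 1 = −(1/2 + (1−H)/k).) -/

import Mathlib

/-!
For `u < v` the substitution `x = uvs/(v - u + us)` maps `(0,1)` onto `(0,u)` and turns the
integral into `(uv)^(-a) (v - u)^(2a-1) B(1 - 2a, a)`; the prefactor `(uv)^a` cancels, and the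
`k`-th power of `(v - u)^(2a-1)` is `(v - u)^(2H-2)` because `(2a - 1) k = 2H - 2`.
-/

open MeasureTheory

/-- The Euler Beta function, `B(a,b) = Γ(a)Γ(b)/Γ(a+b)`. -/
noncomputable def eulerBeta (a b : ℝ) : ℝ := Real.Gamma a * Real.Gamma b / Real.Gamma (a + b)

/-- The exponent `a = 1/2 - (1-H)/k` appearing in the kernel of the Hermite process. -/
noncomputable def aHk (H : ℝ) (k : ℕ) : ℝ := 1 / 2 - (1 - H) / k

open Set Real

lemma eulerBeta_comm (a b : ℝ) : eulerBeta a b = eulerBeta b a := by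
  rw [eulerBeta, eulerBeta, mul_comm, add_comm]

lemma integral_Ioo_rpow_mul_one_sub_rpow {p q : ℝ} (hp : 0 < p) (hq : 0 < q) :
    ∫ x in Ioo (0 : ℝ) 1, x ^ (p - 1) * (1 - x) ^ (q - 1) = eulerBeta p q := by
  have hcomplex : Complex.betaIntegral p q =
      ((∫ x in Ioo (0 : ℝ) 1, x ^ (p - 1) * (1 - x) ^ (q - 1) : ℝ) : ℂ) := by
    rw [Complex.betaIntegral, intervalIntegral.integral_of_le zero_le_one,
      integral_Ioc_eq_integral_Ioo]
    refine (setIntegral_congr_fun measurableSet_Ioo fun x hx => ?_).trans integral_ofReal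
    change _ = ((x ^ (p - 1) * (1 - x) ^ (q - 1) : ℝ) : ℂ)
    push_cast [Complex.ofReal_cpow hx.1.le, Complex.ofReal_cpow (sub_nonneg.2 hx.2.le)]
    rfl
  rw [show eulerBeta p q = ProbabilityTheory.beta p q from rfl,
    ProbabilityTheory.beta_eq_betaIntegralReal p q hp hq, hcomplex, Complex.ofReal_re]

/-- With `D = v - u + us`, the point `x = uvs/D` has `u - x ∝ (1 - s)/D`, `v - x ∝ 1/D` and
`dx ∝ ds/D²`, so all powers of `D` cancel in the kernel. -/
noncomputable def moebiusSubst (u v s : ℝ) : ℝ := u * v * s / (v - u + u * s)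

section moebiusSubst

variable {u v : ℝ}

lemma hasDerivAt_moebiusSubst {s : ℝ} (hs : v - u + u * s ≠ 0) :
    HasDerivAt (moebiusSubst u v) (u * v * (v - u) / (v - u + u * s) ^ 2) s := by
  have hnum : HasDerivAt (fun s : ℝ => u * v * s) (u * v) s := by
    simpa using (hasDerivAt_id s).const_mul (u * v)
  have hden : HasDerivAt (fun s : ℝ => v - u + u * s) u s := by
    simpa using ((hasDerivAt_id s).const_mul u).const_add (v - u)
  exact (hnum.div hden hs).congr_deriv (by ring)

lemma sub_moebiusSubst_left {s : ℝ} (hs : v - u + u * s ≠ 0) :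
    u - moebiusSubst u v s = u * (v - u) * (1 - s) / (v - u + u * s) := by
  rw [moebiusSubst]; field_simp; ring

lemma sub_moebiusSubst_right {s : ℝ} (hs : v - u + u * s ≠ 0) :
    v - moebiusSubst u v s = v * (v - u) / (v - u + u * s) := by
  rw [moebiusSubst]; field_simp; ring

variable (hu : 0 < u) (huv : u < v)
include hu huv

lemma moebiusSubst_denom_pos {s : ℝ} (hs : 0 ≤ s) : 0 < v - u + u * s := by
  nlinarith

lemma injOn_moebiusSubst : InjOn (moebiusSubst u v) (Ioo 0 1) := by
  rintro s ⟨hs0, -⟩ t ⟨ht0, -⟩ h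
  rw [moebiusSubst, moebiusSubst, div_eq_div_iff (moebiusSubst_denom_pos hu huv hs0.le).ne'
    (moebiusSubst_denom_pos hu huv ht0.le).ne'] at h
  have hvu : 0 < v - u := sub_pos.2 huv
  have : u * v * (v - u) * s = u * v * (v - u) * t := by linear_combination h
  exact mul_left_cancel₀ (mul_pos (mul_pos hu (hu.trans huv)) hvu).ne' this

lemma moebiusSubst_image_Ioo : moebiusSubst u v '' Ioo 0 1 = Ioo 0 u := by
  have hvu : 0 < v - u := sub_pos.2 huv
  ext x
  constructor
  · rintro ⟨s, ⟨hs0, hs1⟩, rfl⟩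
    have hD := moebiusSubst_denom_pos hu huv hs0.le
    refine ⟨div_pos (mul_pos (mul_pos hu (hu.trans huv)) hs0) hD, ?_⟩
    rw [← sub_pos, sub_moebiusSubst_left hD.ne']
    have : 0 < 1 - s := sub_pos.2 hs1
    positivity
  · rintro ⟨hx0, hxu⟩
    have hvx : 0 < v - x := by linarith
    have hs : 0 < x * (v - u) / (u * (v - x)) := div_pos (mul_pos hx0 hvu) (mul_pos hu hvx)
    refine ⟨x * (v - u) / (u * (v - x)), ⟨hs, ?_⟩, ?_⟩
    · rw [div_lt_one (mul_pos hu hvx)]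
      nlinarith
    · have hD := moebiusSubst_denom_pos hu huv hs.le
      rw [moebiusSubst, div_eq_iff hD.ne']
      field_simp
      ring

lemma moebiusSubst_deriv_mul_kernel {a s : ℝ} (hs0 : 0 < s) (hs1 : s < 1) :
    u * v * (v - u) / (v - u + u * s) ^ 2 *
      (moebiusSubst u v s ^ (-(2 * a)) * (u - moebiusSubst u v s) ^ (a - 1) *
        (v - moebiusSubst u v s) ^ (a - 1))
    = (u * v) ^ (-a) * (v - u) ^ (2 * a - 1) * (s ^ (-(2 * a)) * (1 - s) ^ (a - 1)) := by
  have hv : 0 < v := hu.trans huv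
  have hvu : 0 < v - u := sub_pos.2 huv
  have h1s : 0 < 1 - s := sub_pos.2 hs1
  have hD := moebiusSubst_denom_pos hu huv hs0.le
  rw [sub_moebiusSubst_left hD.ne', sub_moebiusSubst_right hD.ne', moebiusSubst]
  refine log_injOn_pos (by simp only [mem_Ioi]; positivity) (by simp only [mem_Ioi]; positivity) ?_
  simp (disch := positivity) only [log_mul, log_div, log_rpow, log_pow]
  push_cast
  ring

end moebiusSubst

noncomputable def kernelIntegral (a u v : ℝ) : ℝ :=
  ∫ x in Ioo 0 (min u v), x ^ (-(2 * a)) * (u - x) ^ (a - 1) * (v - x) ^ (a - 1)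

lemma kernelIntegral_comm (a u v : ℝ) : kernelIntegral a u v = kernelIntegral a v u := by
  rw [kernelIntegral, kernelIntegral, min_comm]
  refine setIntegral_congr_fun measurableSet_Ioo fun x _ => ?_
  ring

lemma kernelIntegral_eq_of_lt (a : ℝ) {u v : ℝ} (hu : 0 < u) (huv : u < v) :
    kernelIntegral a u v =
      (u * v) ^ (-a) * (v - u) ^ (2 * a - 1) *
        ∫ s in Ioo 0 1, s ^ (-(2 * a)) * (1 - s) ^ (a - 1) := by
  have hD {s : ℝ} (hs : s ∈ Ioo (0 : ℝ) 1) := moebiusSubst_denom_pos hu huv hs.1.le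
  rw [kernelIntegral, min_eq_left huv.le, ← moebiusSubst_image_Ioo hu huv,
    integral_image_eq_integral_abs_deriv_smul measurableSet_Ioo
      (fun s hs => (hasDerivAt_moebiusSubst (hD hs).ne').hasDerivWithinAt)
      (injOn_moebiusSubst hu huv),
    ← integral_const_mul]
  refine setIntegral_congr_fun measurableSet_Ioo fun s hs => ?_
  have hjac : 0 < u * v * (v - u) / (v - u + u * s) ^ 2 :=
    div_pos (mul_pos (mul_pos hu (hu.trans huv)) (sub_pos.2 huv)) (pow_pos (hD hs) 2)
  rw [smul_eq_mul, abs_of_pos hjac, moebiusSubst_deriv_mul_kernel hu huv hs.1 hs.2]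

lemma rpow_mul_kernelIntegral_of_lt {a : ℝ} (ha0 : 0 < a) (ha : a < 1 / 2) {u v : ℝ}
    (hu : 0 < u) (huv : u < v) :
    (u * v) ^ a * kernelIntegral a u v = eulerBeta a (1 - 2 * a) * (v - u) ^ (2 * a - 1) := by
  have hbeta := integral_Ioo_rpow_mul_one_sub_rpow (by linarith : 0 < 1 - 2 * a) ha0
  rw [sub_sub_cancel_left] at hbeta
  rw [kernelIntegral_eq_of_lt a hu huv, hbeta, eulerBeta_comm, ← mul_assoc, ← mul_assoc,
    ← rpow_add (mul_pos hu (hu.trans huv)), add_neg_cancel, rpow_zero, one_mul, mul_comm]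

lemma rpow_mul_kernelIntegral {a : ℝ} (ha0 : 0 < a) (ha : a < 1 / 2) {u v : ℝ} (hu : 0 < u)
    (hv : 0 < v) (huv : u ≠ v) :
    (u * v) ^ a * kernelIntegral a u v = eulerBeta a (1 - 2 * a) * |u - v| ^ (2 * a - 1) := by
  rcases huv.lt_or_gt with h | h
  · rw [rpow_mul_kernelIntegral_of_lt ha0 ha hu h, abs_sub_comm, abs_of_pos (sub_pos.2 h)]
  · rw [mul_comm u v, kernelIntegral_comm, rpow_mul_kernelIntegral_of_lt ha0 ha hv h,
      abs_of_pos (sub_pos.2 h)]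

lemma aHk_pos {H : ℝ} (hH : 1 / 2 < H) {k : ℕ} (hk : 0 < k) : 0 < aHk H k := by
  have hk1 : (1 : ℝ) ≤ k := by exact_mod_cast hk
  rw [aHk, sub_pos, div_lt_iff₀ (by linarith)]
  linarith

lemma aHk_lt_half {H : ℝ} (hH : H < 1) {k : ℕ} (hk : 0 < k) : aHk H k < 1 / 2 := by
  have : 0 < (1 - H) / k := div_pos (by linarith) (by exact_mod_cast hk)
  rw [aHk]; linarith

lemma two_mul_aHk_sub_one_mul (H : ℝ) {k : ℕ} (hk : k ≠ 0) :
    (2 * aHk H k - 1) * k = 2 * H - 2 := by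
  rw [aHk]; field_simp; ring

theorem kernel_integral_pow_eq_general (T H : ℝ) (k : ℕ)
    (hH : H ∈ Set.Ioo (1 / 2 : ℝ) 1) (hk : 0 < k)
    (u v : ℝ) (hu : u ∈ Set.Ioc (0 : ℝ) T) (hv : v ∈ Set.Ioc (0 : ℝ) T) (huv : u ≠ v) :
    ((u * v) ^ aHk H k *
        ∫ x in Set.Ioo (0 : ℝ) (min u v),
          x ^ (-(2 * aHk H k)) * (u - x) ^ (aHk H k - 1) * (v - x) ^ (aHk H k - 1)) ^ k =
      eulerBeta (aHk H k) (1 - 2 * aHk H k) ^ k * |u - v| ^ (2 * H - 2) := by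
  change ((u * v) ^ aHk H k * kernelIntegral (aHk H k) u v) ^ k = _
  rw [rpow_mul_kernelIntegral (aHk_pos hH.1 hk) (aHk_lt_half hH.2 hk) hu.1 hv.1 huv, mul_pow,
    ← rpow_natCast (|u - v| ^ _), ← rpow_mul (abs_nonneg _), two_mul_aHk_sub_one_mul H hk.ne']

/-- For `H ∈ (1/2,1)`, `k ∈ ℕ`, `a = 1/2 - (1-H)/k` and `u, v ∈ (0,T]` with `u ≠ v`,
`((uv)^a ∫_0^{u∧v} x^{-2a} (u-x)^{a-1} (v-x)^{a-1} dx)^k = B(a, 1-2a)^k |u-v|^{2H-2}`. -/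
theorem kernel_integral_pow_eq (T H : ℝ) (k : ℕ) (hT : 0 < T)
    (hH : H ∈ Set.Ioo (1 / 2 : ℝ) 1) (hk : 0 < k)
    (u v : ℝ) (hu : u ∈ Set.Ioc (0 : ℝ) T) (hv : v ∈ Set.Ioc (0 : ℝ) T) (huv : u ≠ v) :
    ((u * v) ^ aHk H k *
        ∫ x in Set.Ioo (0 : ℝ) (min u v),
          x ^ (-(2 * aHk H k)) * (u - x) ^ (aHk H k - 1) * (v - x) ^ (aHk H k - 1)) ^ k =
      eulerBeta (aHk H k) (1 - 2 * aHk H k) ^ k * |u - v| ^ (2 * H - 2) :=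
  kernel_integral_pow_eq_general T H k hH hk u v hu hv huv
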